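/- Let λ ∈ [0,1), δ > 0, K > 0, and let a⁰ : {1,2,3,...} → {0,1} be multiplicative (a⁰(1) = 1 and a⁰(mn) = a⁰(m)·a⁰(n) for coprime m, n). Suppose the set A = { p prime : a⁰(p) = 1 } satisfies | #{ p ∈ A : p ≤ t } − (1−λ)·t/log t | ≤ K·t/(log t)^{1+δ} for all t ≥ 2. For real s > 1 let φ(s) = Σ_{n ≥ 1} a⁰(n)·n^{−s} (which converges). Then lim_{s → 1⁺} (s−1)^{1−λ}·φ(s) exists and is a positive real number. -/

import Mathlib

/-!
Let `A(t) = ∑_{p ≤ t} a⁰(p)` count the primes of `A` and `P(σ) = ∑_p a⁰(p) p^{-σ}`. Summing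
`p^{-σ} = σ ∫_p^∞ t^{-σ-1} dt` gives `P(σ) = σ ∫_2^∞ A(t) t^{-σ-1} dt`. Splitting
`A(t) = (1-λ) t / log t + E(t)`, the main term contributes `(1-λ) σ E₁((σ-1) log 2)`, where
`E₁(x) = ∫_x^∞ e^{-u}/u du = -log x + O(1)`, while the error term converges as `σ → 1⁺` because
`|E(t)| t^{-σ-1} ≤ K / (t (log t)^{1+δ})` is integrable. So `P(σ) + (1-λ) log (σ-1)` has a limit.
By the Euler product, `log φ(σ) = ∑_p log F_p(σ)` with `log F_p(σ) = a⁰(p) p^{-σ} + O(p^{-2})`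
uniformly for `σ ≥ 1`, so `log φ(σ) - P(σ)` has a limit too, and `(σ-1)^{1-λ} φ(σ)` tends to the
exponential of the sum of the two limits.
-/

open Real Filter MeasureTheory Set Topology

lemma abs_exp_neg_sub_one_div_le_one {u : ℝ} (hu : 0 ≤ u) : |(exp (-u) - 1) / u| ≤ 1 := by
  rcases hu.eq_or_lt with rfl | hu
  · simp
  rw [abs_div, abs_of_pos hu, div_le_one hu, abs_le]
  constructor <;> linarith [add_one_le_exp (-u), exp_le_one_iff.2 (neg_nonpos.2 hu.le)]

lemma integrableOn_exp_neg_div_Ioi {x : ℝ} (hx : 0 < x) :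
    IntegrableOn (fun u => exp (-u) / u) (Ioi x) := by
  refine Integrable.mono' ((exp_neg_integrableOn_Ioi x one_pos).div_const x)
    (by fun_prop : Measurable fun u : ℝ => exp (-u) / u).aestronglyMeasurable ?_
  filter_upwards [ae_restrict_mem measurableSet_Ioi] with u hu
  rw [norm_div, norm_of_nonneg (exp_pos _).le, norm_of_nonneg (hx.trans hu).le, neg_one_mul]
  exact div_le_div_of_nonneg_left (exp_pos _).le hx (le_of_lt hu)

lemma exists_tendsto_integral_exp_neg_div_add_log :
    ∃ C, Tendsto (fun x => (∫ u in Ioi x, exp (-u) / u) + log x) (𝓝[>] 0) (𝓝 C) := by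
  set g : ℝ → ℝ := fun u => (exp (-u) - 1) / u
  have hg : IntegrableOn g (uIcc 0 1) := by
    refine Measure.integrableOn_of_bounded (M := 1) (by simp)
      (by fun_prop : Measurable g).aestronglyMeasurable ?_
    filter_upwards [ae_restrict_mem measurableSet_uIcc] with u hu
    rw [uIcc_of_le zero_le_one] at hu
    exact abs_exp_neg_sub_one_div_le_one hu.1
  -- for `0 < x < 1` the function equals `∫_x^1 g + ∫_1^∞ e^{-u}/u`, and `g` is bounded near `0`
  refine ⟨(∫ u in (0 : ℝ)..1, g u) + ∫ u in Ioi 1, exp (-u) / u, ?_⟩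
  have hprim : Tendsto (fun x => ∫ u in x..1, g u) (𝓝[>] 0) (𝓝 (∫ u in (0 : ℝ)..1, g u)) := by
    have := intervalIntegral.continuousOn_primitive_interval_left hg 0 left_mem_uIcc
    rw [uIcc_of_le zero_le_one] at this
    rw [← nhdsWithin_Ioo_eq_nhdsGT one_pos]
    exact this.mono Ioo_subset_Icc_self
  refine (hprim.add_const _).congr' ?_
  filter_upwards [Ioo_mem_nhdsGT one_pos] with x ⟨hx0, hx1⟩
  have hpos : ∀ u ∈ uIcc x 1, u ≠ 0 := fun u hu =>
    (hx0.trans_le (by rw [uIcc_of_le hx1.le] at hu; exact hu.1)).ne'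
  have hsplit : ∫ u in x..1, g u = (∫ u in x..1, exp (-u) / u) - ∫ u in x..1, u⁻¹ := by
    rw [← intervalIntegral.integral_sub]
    · simp only [g, sub_div, one_div]
    · exact (ContinuousOn.div (by fun_prop) continuousOn_id hpos).intervalIntegrable
    · exact (continuousOn_inv₀.mono fun u hu => hpos u hu).intervalIntegrable
  rw [hsplit, integral_inv_of_pos hx0 one_pos, one_div, log_inv,
    ← intervalIntegral.integral_interval_add_Ioi (integrableOn_exp_neg_div_Ioi hx0)
      (integrableOn_exp_neg_div_Ioi one_pos)]
  ring

lemma integral_rpow_neg_div_log_eq {σ : ℝ} (hσ : 1 < σ) :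
    ∫ t in Ioi 2, t ^ (-σ) / log t = ∫ u in Ioi ((σ - 1) * log 2), exp (-u) / u := by
  have hσ' : 0 < σ - 1 := sub_pos.2 hσ
  -- substitute `u = (σ - 1) log t`
  rw [← integral_comp_mul_left_Ioi' _ _ hσ', smul_eq_mul, ← integral_const_mul,
    ← integral_comp_log_Ioi _ two_pos]
  refine setIntegral_congr_fun measurableSet_Ioi fun t h2 => ?_
  have ht : 0 < t := two_pos.trans h2
  have hexp : exp (-((σ - 1) * log t)) = t / t ^ σ := by
    rw [rpow_def_of_pos ht, ← exp_log ht, log_exp, ← exp_sub]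
    ring_nf
  have hlog : log t ≠ 0 := (log_pos (by linarith [mem_Ioi.1 h2])).ne'
  simp only [smul_eq_mul]
  rw [hexp, rpow_neg ht.le]
  field_simp

lemma exists_tendsto_integral_rpow_neg_div_log_add_log :
    ∃ C, Tendsto (fun σ => (∫ t in Ioi 2, t ^ (-σ) / log t) + log (σ - 1)) (𝓝[>] 1) (𝓝 C) := by
  obtain ⟨C, hC⟩ := exists_tendsto_integral_exp_neg_div_add_log
  have hlog2 : 0 < log 2 := log_pos one_lt_two
  have hx : Tendsto (fun σ : ℝ => (σ - 1) * log 2) (𝓝[>] 1) (𝓝[>] 0) := by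
    refine tendsto_nhdsWithin_iff.2 ⟨?_, ?_⟩
    · exact tendsto_nhdsWithin_of_tendsto_nhds
        ((by fun_prop : Continuous fun σ : ℝ => (σ - 1) * log 2).tendsto' 1 0 (by simp))
    · filter_upwards [self_mem_nhdsWithin] with σ hσ
      exact mul_pos (sub_pos.2 hσ) hlog2
  refine ⟨C - log (log 2), ((hC.comp hx).sub_const _).congr' ?_⟩
  filter_upwards [self_mem_nhdsWithin] with σ hσ
  simp only [Function.comp_apply]
  rw [integral_rpow_neg_div_log_eq hσ, log_mul (sub_pos.2 hσ).ne' hlog2.ne']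
  ring

lemma integrableOn_rpow_neg_div_log {σ : ℝ} (hσ : 1 < σ) :
    IntegrableOn (fun t => t ^ (-σ) / log t) (Ioi 2) := by
  have hlog2 : 0 < log 2 := log_pos one_lt_two
  refine Integrable.mono' ((integrableOn_Ioi_rpow_of_lt (neg_lt_neg hσ) two_pos).div_const (log 2))
    ?_ ?_
  · exact (by fun_prop : Measurable fun t : ℝ => t ^ (-σ) / log t).aestronglyMeasurable
  filter_upwards [ae_restrict_mem measurableSet_Ioi] with t ht
  have hlog : log 2 ≤ log t := log_le_log two_pos (le_of_lt ht)
  rw [norm_div, norm_of_nonneg (rpow_nonneg (by linarith [mem_Ioi.1 ht]) _),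
    norm_of_nonneg (hlog2.trans_le hlog).le]
  exact div_le_div_of_nonneg_left (rpow_nonneg (by linarith [mem_Ioi.1 ht]) _) hlog2 hlog

lemma integrableOn_inv_mul_log_rpow {δ : ℝ} (hδ : 0 < δ) :
    IntegrableOn (fun t => (t * log t ^ (1 + δ))⁻¹) (Ioi 2) := by
  have := (integrableOn_comp_log_Ioi (fun y => y ^ (-(1 + δ))) two_pos).2
    (integrableOn_Ioi_rpow_of_lt (by linarith) (log_pos one_lt_two))
  refine this.congr_fun (fun t ht => ?_) measurableSet_Ioi
  have hlog : 0 < log t := log_pos (by linarith [mem_Ioi.1 ht])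
  simp only [smul_eq_mul, rpow_neg hlog.le, mul_inv]

section CountingFunction

variable {A : ℝ → ℝ} {κ δ K : ℝ}
  (hbound : ∀ t, 2 ≤ t → |A t - κ * t / log t| ≤ K * t / log t ^ (1 + δ))
include hbound

lemma norm_error_mul_rpow_le {σ t : ℝ} (hσ : 1 ≤ σ) (ht : 2 ≤ t) :
    ‖(A t - κ * t / log t) * t ^ (-σ - 1)‖ ≤ K * (t * log t ^ (1 + δ))⁻¹ := by
  have ht0 : 0 < t := by linarith
  have hK : 0 ≤ K * t / log t ^ (1 + δ) := (abs_nonneg _).trans (hbound t ht)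
  calc ‖(A t - κ * t / log t) * t ^ (-σ - 1)‖
      = |A t - κ * t / log t| * t ^ (-σ - 1) := by
        rw [norm_mul, norm_of_nonneg (rpow_nonneg ht0.le _), Real.norm_eq_abs]
    _ ≤ K * t / log t ^ (1 + δ) * t ^ (-2 : ℝ) :=
        mul_le_mul (hbound t ht) (rpow_le_rpow_of_exponent_le (by linarith) (by linarith))
          (rpow_nonneg ht0.le _) hK
    _ = K * (t * log t ^ (1 + δ))⁻¹ := by
        rw [rpow_neg ht0.le, rpow_two]
        field_simp

lemma integrableOn_error_mul_rpow (hA : Measurable A) (hδ : 0 < δ) {σ : ℝ} (hσ : 1 ≤ σ) :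
    IntegrableOn (fun t => (A t - κ * t / log t) * t ^ (-σ - 1)) (Ioi 2) := by
  refine Integrable.mono' ((integrableOn_inv_mul_log_rpow hδ).const_mul K)
    (by fun_prop : Measurable fun t => (A t - κ * t / log t) * t ^ (-σ - 1)).aestronglyMeasurable ?_
  filter_upwards [ae_restrict_mem measurableSet_Ioi] with t ht
  exact norm_error_mul_rpow_le hbound hσ (le_of_lt ht)

lemma tendsto_integral_error_mul_rpow (hA : Measurable A) (hδ : 0 < δ) :
    Tendsto (fun σ : ℝ => ∫ t in Ioi 2, (A t - κ * t / log t) * t ^ (-σ - 1)) (𝓝[>] 1)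
      (𝓝 (∫ t in Ioi 2, (A t - κ * t / log t) * t ^ (-2 : ℝ))) := by
  refine tendsto_integral_filter_of_dominated_convergence _ ?_ ?_
    ((integrableOn_inv_mul_log_rpow hδ).const_mul K) ?_
  · filter_upwards [self_mem_nhdsWithin] with σ (hσ : 1 < σ)
    exact (integrableOn_error_mul_rpow hbound hA hδ (le_of_lt hσ)).1
  · filter_upwards [self_mem_nhdsWithin] with σ (hσ : 1 < σ)
    filter_upwards [ae_restrict_mem measurableSet_Ioi] with t ht
    exact norm_error_mul_rpow_le hbound (le_of_lt hσ) (le_of_lt ht)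
  · filter_upwards [ae_restrict_mem measurableSet_Ioi] with t ht
    have hcont : Continuous fun σ : ℝ => t ^ (-σ - 1) :=
      continuous_const.rpow (by fun_prop) fun _ => Or.inl (by linarith [mem_Ioi.1 ht])
    have h := (hcont.tendsto 1).const_mul (A t - κ * t / log t)
    rw [show -(1 : ℝ) - 1 = -2 by norm_num] at h
    exact h.mono_left nhdsWithin_le_nhds

theorem exists_tendsto_mul_integral_add_mul_log (hA : Measurable A) (hδ : 0 < δ) :
    ∃ C, Tendsto (fun σ => σ * (∫ t in Ioi 2, A t * t ^ (-σ - 1)) + κ * log (σ - 1))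
      (𝓝[>] 1) (𝓝 C) := by
  obtain ⟨CI, hI⟩ := exists_tendsto_integral_rpow_neg_div_log_add_log
  have hJ := tendsto_integral_error_mul_rpow hbound hA hδ
  have hσ : Tendsto (fun σ : ℝ => σ) (𝓝[>] 1) (𝓝 1) := tendsto_nhdsWithin_of_tendsto_nhds tendsto_id
  have hxlogx : Tendsto (fun σ : ℝ => (σ - 1) * log (σ - 1)) (𝓝[>] 1) (𝓝 0) := by
    have h := continuous_mul_log.tendsto' 0 0 (by simp)
    exact h.comp (tendsto_nhdsWithin_of_tendsto_nhds
      ((continuous_sub_right (1 : ℝ)).tendsto' 1 0 (sub_self 1)))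
  -- with `I, J` the integrals of `hI, hJ`, the function is
  -- `σ (κ (I σ + log (σ - 1)) + J σ) - κ (σ - 1) log (σ - 1)`
  have hlim := (hσ.mul ((hI.const_mul κ).add hJ)).sub (hxlogx.const_mul κ)
  rw [one_mul, mul_zero, sub_zero] at hlim
  refine ⟨_, hlim.congr' ?_⟩
  filter_upwards [self_mem_nhdsWithin] with σ (hσ : 1 < σ)
  have hsplit : ∫ t in Ioi 2, A t * t ^ (-σ - 1) = κ * (∫ t in Ioi 2, t ^ (-σ) / log t)
      + ∫ t in Ioi 2, (A t - κ * t / log t) * t ^ (-σ - 1) := by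
    rw [← integral_const_mul, ← integral_add ((integrableOn_rpow_neg_div_log hσ).const_mul κ)
      (integrableOn_error_mul_rpow hbound hA hδ (le_of_lt hσ))]
    refine setIntegral_congr_fun measurableSet_Ioi fun t ht => ?_
    have ht0 : 0 < t := two_pos.trans ht
    have hlog : log t ≠ 0 := (log_pos (by linarith [mem_Ioi.1 ht])).ne'
    have : t ^ (-σ) = t * t ^ (-σ - 1) := by
      rw [← rpow_one_add' ht0.le (by linarith)]; ring_nf
    rw [this]
    field_simp
    ring
  rw [hsplit]
  ring

end CountingFunction

lemma tsum_indicator_Ici_mul {c : ℕ → ℝ} (g : ℝ → ℝ) {t : ℝ} (ht : 0 ≤ t) :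
    ∑' n : ℕ, (Ici (n : ℝ)).indicator (fun t => c n * g t) t =
      (∑ k ∈ Finset.Icc 0 ⌊t⌋₊, c k) * g t := by
  rw [Finset.sum_mul, tsum_eq_sum (s := Finset.Icc 0 ⌊t⌋₊)]
  · exact Finset.sum_congr rfl fun n hn =>
      indicator_of_mem ((Nat.le_floor_iff ht).1 (Finset.mem_Icc.1 hn).2) _
  · exact fun n hn => indicator_of_notMem
      (fun h => hn (Finset.mem_Icc.2 ⟨Nat.zero_le n, Nat.le_floor h⟩)) _

theorem tsum_mul_rpow_neg_eq_mul_integral {c : ℕ → ℝ} (hc : ∀ n, 0 ≤ c n)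
    (hc2 : ∀ n < 2, c n = 0) {σ : ℝ} (hσ : 1 < σ)
    (hsum : Summable fun n : ℕ => c n * (n : ℝ) ^ (-σ)) :
    ∑' n : ℕ, c n * (n : ℝ) ^ (-σ) =
      σ * ∫ t in Ioi 2, (∑ k ∈ Finset.Icc 0 ⌊t⌋₊, c k) * t ^ (-σ - 1) := by
  -- integrate over `Ici 2` rather than `Ioi 2`, so that `Ici 2 ∩ Ici n = Ici n` also for `n = 2`
  set F : ℕ → ℝ → ℝ := fun n => (Ici (n : ℝ)).indicator fun t => c n * t ^ (-σ - 1)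
  have hF_nonneg (n : ℕ) (t : ℝ) : 0 ≤ F n t :=
    indicator_nonneg (fun t ht => mul_nonneg (hc n)
      (rpow_nonneg ((Nat.cast_nonneg n).trans ht) _)) t
  have hF_int (n : ℕ) : Integrable (F n) (volume.restrict (Ici 2)) :=
    (((integrableOn_Ici_iff_integrableOn_Ioi (by finiteness)).2
      (integrableOn_Ioi_rpow_of_lt (by linarith) two_pos)).const_mul (c n)).indicator
      measurableSet_Ici
  have hF_integral (n : ℕ) : ∫ t in Ici 2, F n t = c n * (n : ℝ) ^ (-σ) / σ := by
    rcases lt_or_ge n 2 with hn | hn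
    · simp [F, hc2 n hn]
    have hn' : (2 : ℝ) ≤ n := by exact_mod_cast hn
    rw [setIntegral_indicator measurableSet_Ici, Ici_inter_Ici, sup_eq_right.2 hn',
      integral_Ici_eq_integral_Ioi, integral_const_mul,
      integral_Ioi_rpow_of_lt (by linarith) (by linarith), show -σ - 1 + 1 = -σ by ring]
    field_simp
  have hF_hasSum := hasSum_integral_of_summable_integral_norm hF_int <| by
    simpa only [fun n t => norm_of_nonneg (hF_nonneg n t), hF_integral] using hsum.div_const σ
  calc ∑' n : ℕ, c n * (n : ℝ) ^ (-σ) = σ * ∑' n : ℕ, c n * (n : ℝ) ^ (-σ) / σ := by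
        rw [tsum_div_const]; field_simp
    _ = σ * ∫ t in Ici 2, ∑' n, F n t := by simp only [← hF_integral, hF_hasSum.tsum_eq]
    _ = _ := by
        rw [integral_Ici_eq_integral_Ioi]
        congr 1
        exact setIntegral_congr_fun measurableSet_Ioi fun t ht =>
          tsum_indicator_Ici_mul _ (zero_le_two.trans (le_of_lt ht))

theorem exists_tendsto_tsum_mul_rpow_neg_add_mul_log {c : ℕ → ℝ} {κ δ K : ℝ}
    (hc : ∀ n, 0 ≤ c n) (hc2 : ∀ n < 2, c n = 0)
    (hsum : ∀ σ : ℝ, 1 < σ → Summable fun n : ℕ => c n * (n : ℝ) ^ (-σ)) (hδ : 0 < δ)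
    (hbound : ∀ t, 2 ≤ t →
      |(∑ k ∈ Finset.Icc 0 ⌊t⌋₊, c k) - κ * t / log t| ≤ K * t / log t ^ (1 + δ)) :
    ∃ C, Tendsto (fun σ : ℝ => (∑' n : ℕ, c n * (n : ℝ) ^ (-σ)) + κ * log (σ - 1)) (𝓝[>] 1)
      (𝓝 C) := by
  obtain ⟨C, hC⟩ := exists_tendsto_mul_integral_add_mul_log hbound
    ((measurable_from_nat (f := fun m => ∑ k ∈ Finset.Icc 0 m, c k)).comp
      Nat.measurable_floor) hδ
  refine ⟨C, hC.congr' ?_⟩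
  filter_upwards [self_mem_nhdsWithin] with σ (hσ : 1 < σ)
  rw [tsum_mul_rpow_neg_eq_mul_integral hc hc2 hσ (hsum σ hσ)]

lemma abs_log_one_add_sub_self_le {x : ℝ} (hx : 0 ≤ x) : |log (1 + x) - x| ≤ x ^ 2 := by
  have hlow : x - x ^ 2 ≤ 2 * x / (x + 2) := by
    rw [le_div_iff₀ (by linarith)]; nlinarith
  have hup : log (1 + x) ≤ x := by linarith [log_le_sub_one_of_pos (by linarith : 0 < 1 + x)]
  rw [abs_le]
  constructor <;> linarith [le_log_one_add_of_nonneg hx]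

lemma hasSum_log_of_hasProd {ι : Type*} {f : ι → ℝ} {a : ℝ} (hf : ∀ i, 0 < f i) (ha : 0 < a)
    (h : HasProd f a) : HasSum (fun i => log (f i)) (log a) :=
  ((continuousAt_log ha.ne').tendsto.comp h).congr fun s => by
    simp [log_prod fun i _ => (hf i).ne']

lemma tendsto_rpow_neg_nhdsGT_one {x : ℝ} (hx : x ≠ 0) :
    Tendsto (fun σ : ℝ => x ^ (-σ)) (𝓝[>] 1) (𝓝 (x ^ (-1 : ℝ))) :=
  (((continuous_const_rpow hx).comp continuous_neg).tendsto 1).mono_left nhdsWithin_le_nhds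

noncomputable def eulerFactor (a : ℕ → ℝ) (σ : ℝ) (p : ℕ) : ℝ :=
  ∑' e : ℕ, a (p ^ e) * ((p ^ e : ℕ) : ℝ) ^ (-σ)

lemma rpow_neg_le_inv_of_prime {p : ℕ} (hp : p.Prime) {σ : ℝ} (hσ : 1 ≤ σ) :
    (p : ℝ) ^ (-σ) ≤ (p : ℝ)⁻¹ := by
  rw [← rpow_neg_one]
  exact rpow_le_rpow_of_exponent_le (by exact_mod_cast hp.one_le) (neg_le_neg hσ)

lemma inv_le_half_of_prime {p : ℕ} (hp : p.Prime) : (p : ℝ)⁻¹ ≤ 1 / 2 := by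
  rw [one_div]
  exact inv_anti₀ two_pos (by exact_mod_cast hp.two_le)

section EulerProduct

variable {a : ℕ → ℝ} (ha : ∀ n, 1 ≤ n → a n ∈ Icc (0 : ℝ) 1)
include ha

lemma mul_rpow_neg_mem_Icc {σ : ℝ} (hσ : σ ≠ 0) (n : ℕ) :
    a n * (n : ℝ) ^ (-σ) ∈ Icc 0 ((n : ℝ) ^ (-σ)) := by
  rcases Nat.eq_zero_or_pos n with rfl | hn
  · simp [zero_rpow (neg_ne_zero.2 hσ)]
  have hpow := rpow_nonneg (Nat.cast_nonneg n) (-σ)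
  exact ⟨mul_nonneg (ha n hn).1 hpow, mul_le_of_le_one_left hpow (ha n hn).2⟩

lemma summable_norm_mul_rpow_neg {σ : ℝ} (hσ : 1 < σ) :
    Summable fun n : ℕ => ‖a n * (n : ℝ) ^ (-σ)‖ := by
  refine (summable_nat_rpow.2 (neg_lt_neg hσ)).of_nonneg_of_le (fun _ => norm_nonneg _)
    fun n => ?_
  have h := mul_rpow_neg_mem_Icc ha (by linarith : σ ≠ 0) n
  rw [norm_of_nonneg h.1]
  exact h.2

lemma one_le_tsum_mul_rpow_neg (ha1 : a 1 = 1) {σ : ℝ} (hσ : 1 < σ) :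
    1 ≤ ∑' n : ℕ, a n * (n : ℝ) ^ (-σ) := by
  simpa [ha1] using (summable_norm_mul_rpow_neg ha hσ).of_norm.le_tsum 1
    fun n _ => (mul_rpow_neg_mem_Icc ha (by linarith : σ ≠ 0) n).1

lemma hasProd_eulerFactor (ha1 : a 1 = 1)
    (hmul : ∀ m n : ℕ, 1 ≤ m → 1 ≤ n → Nat.Coprime m n → a (m * n) = a m * a n)
    {σ : ℝ} (hσ : 1 < σ) :
    HasProd (fun p : Nat.Primes => eulerFactor a σ p) (∑' n : ℕ, a n * (n : ℝ) ^ (-σ)) := by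
  have h0 : (0 : ℝ) ^ (-σ) = 0 := zero_rpow (by linarith)
  refine EulerProduct.eulerProduct_hasProd (f := fun n => a n * (n : ℝ) ^ (-σ)) (by simp [ha1])
    (fun {m n} hmn => ?_) (summable_norm_mul_rpow_neg ha hσ) (by simp [h0])
  rcases Nat.eq_zero_or_pos m with rfl | hm
  · simp [(Nat.coprime_zero_left n).1 hmn, h0]
  rcases Nat.eq_zero_or_pos n with rfl | hn
  · simp [(Nat.coprime_zero_right m).1 hmn, h0]
  simp only [hmul m n hm hn hmn, Nat.cast_mul, mul_rpow (Nat.cast_nonneg _) (Nat.cast_nonneg _)]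
  ring

section LocalFactor

variable {p : ℕ} (hp : p.Prime)
include hp

lemma eulerFactor_term_mem_Icc (σ : ℝ) (e : ℕ) :
    a (p ^ e) * ((p ^ e : ℕ) : ℝ) ^ (-σ) ∈ Icc 0 (((p : ℝ) ^ (-σ)) ^ e) := by
  have hpow := rpow_nonneg (Nat.cast_nonneg (p ^ e)) (-σ)
  have hae := ha (p ^ e) (Nat.one_le_pow _ _ hp.pos)
  rw [rpow_pow_comm (Nat.cast_nonneg p), ← Nat.cast_pow]
  exact ⟨mul_nonneg hae.1 hpow, mul_le_of_le_one_left hpow hae.2⟩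

lemma eulerFactor_sub_mem_Icc (ha1 : a 1 = 1) {σ : ℝ} (hσ : 1 ≤ σ) :
    eulerFactor a σ p - 1 - a p * (p : ℝ) ^ (-σ) ∈ Icc 0 (2 * ((p : ℝ) ^ (-σ)) ^ 2) := by
  have hterm := eulerFactor_term_mem_Icc ha hp σ
  set r := (p : ℝ) ^ (-σ) with hr_def
  have hr0 : 0 ≤ r := rpow_nonneg (Nat.cast_nonneg p) _
  have hr : r ≤ 1 / 2 := (rpow_neg_le_inv_of_prime hp hσ).trans (inv_le_half_of_prime hp)
  have hgeom : Summable fun e : ℕ => r ^ e := summable_geometric_of_lt_one hr0 (by linarith)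
  have hsum : Summable fun e : ℕ => a (p ^ e) * ((p ^ e : ℕ) : ℝ) ^ (-σ) :=
    hgeom.of_nonneg_of_le (fun e => (hterm e).1) fun e => (hterm e).2
  have htail : ∑' e : ℕ, a (p ^ (e + 2)) * ((p ^ (e + 2) : ℕ) : ℝ) ^ (-σ) ≤ 2 * r ^ 2 :=
    calc _ ≤ ∑' e : ℕ, r ^ 2 * r ^ e :=
          ((summable_nat_add_iff 2).2 hsum).tsum_le_tsum
            (fun e => (hterm (e + 2)).2.trans_eq (by ring)) (hgeom.mul_left _)
      _ = r ^ 2 * (1 - r)⁻¹ := by rw [tsum_mul_left, tsum_geometric_of_lt_one hr0 (by linarith)]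
      _ ≤ 2 * r ^ 2 := by
          have : (1 - r)⁻¹ ≤ 2 := by rw [inv_le_comm₀ (by linarith) two_pos]; linarith
          nlinarith
  rw [eulerFactor, ← hsum.sum_add_tsum_nat_add 2]
  simp only [Finset.sum_range_succ, Finset.sum_range_zero, pow_zero, pow_one, ha1, Nat.cast_one,
    one_rpow, mul_one, zero_add, ← hr_def]
  have htail0 : 0 ≤ ∑' e : ℕ, a (p ^ (e + 2)) * ((p ^ (e + 2) : ℕ) : ℝ) ^ (-σ) :=
    tsum_nonneg fun e => (hterm (e + 2)).1
  exact ⟨by linarith, by linarith⟩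

lemma one_le_eulerFactor (ha1 : a 1 = 1) {σ : ℝ} (hσ : 1 ≤ σ) : 1 ≤ eulerFactor a σ p := by
  have h := eulerFactor_sub_mem_Icc ha hp ha1 hσ
  have h1 := (eulerFactor_term_mem_Icc ha hp σ 1).1
  simp only [pow_one] at h1
  linarith [h.1]

lemma abs_log_eulerFactor_sub_le (ha1 : a 1 = 1) {σ : ℝ} (hσ : 1 ≤ σ) :
    |log (eulerFactor a σ p) - a p * (p : ℝ) ^ (-σ)| ≤ 6 * ((p : ℝ) ^ 2)⁻¹ := by
  have hT := eulerFactor_sub_mem_Icc ha hp ha1 hσ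
  set r := (p : ℝ) ^ (-σ)
  set x := eulerFactor a σ p - 1
  have hr0 : 0 ≤ r := rpow_nonneg (Nat.cast_nonneg p) _
  have hr : r ≤ (p : ℝ)⁻¹ := rpow_neg_le_inv_of_prime hp hσ
  have hr2 : r ≤ 1 / 2 := hr.trans (inv_le_half_of_prime hp)
  have hap := ha p hp.one_le
  have hx0 : 0 ≤ x := by nlinarith [hT.1, hap.1]
  have hx : x ≤ 2 * r := by nlinarith [hT.2, hap.2]
  have hlog := abs_log_one_add_sub_self_le hx0
  rw [add_sub_cancel] at hlog
  calc |log (eulerFactor a σ p) - a p * r|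
      ≤ |log (eulerFactor a σ p) - x| + |x - a p * r| := abs_sub_le _ _ _
    _ ≤ x ^ 2 + 2 * r ^ 2 := by
        rw [abs_of_nonneg (by linarith [hT.1] : 0 ≤ x - a p * r)]
        linarith [hT.2]
    _ ≤ 6 * r ^ 2 := by nlinarith
    _ ≤ 6 * ((p : ℝ) ^ 2)⁻¹ := by
        rw [← inv_pow]; gcongr

lemma tendsto_eulerFactor :
    Tendsto (fun σ => eulerFactor a σ p) (𝓝[>] 1) (𝓝 (eulerFactor a 1 p)) := by
  have hp0 : (0 : ℝ) < p := by exact_mod_cast hp.pos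
  refine tendsto_tsum_of_dominated_convergence (bound := fun e => ((p : ℝ)⁻¹) ^ e)
    (summable_geometric_of_lt_one (inv_nonneg.2 hp0.le)
      ((inv_le_half_of_prime hp).trans_lt (by norm_num))) (fun e => ?_) ?_
  · have hpe : ((p ^ e : ℕ) : ℝ) ≠ 0 := by exact_mod_cast (pow_pos hp.pos e).ne'
    exact (tendsto_rpow_neg_nhdsGT_one hpe).const_mul _
  · filter_upwards [self_mem_nhdsWithin] with σ (hσ : 1 < σ)
    intro e
    have h := eulerFactor_term_mem_Icc ha hp σ e
    rw [norm_of_nonneg h.1]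
    exact h.2.trans (pow_le_pow_left₀ (rpow_nonneg hp0.le _)
      (rpow_neg_le_inv_of_prime hp hσ.le) e)

end LocalFactor

theorem exists_tendsto_log_tsum_sub_tsum_primes (ha1 : a 1 = 1)
    (hmul : ∀ m n : ℕ, 1 ≤ m → 1 ≤ n → Nat.Coprime m n → a (m * n) = a m * a n) :
    ∃ R, Tendsto (fun σ : ℝ => log (∑' n : ℕ, a n * (n : ℝ) ^ (-σ)) -
      ∑' p : Nat.Primes, a p * (p : ℝ) ^ (-σ)) (𝓝[>] 1) (𝓝 R) := by
  have hbound : Summable fun p : Nat.Primes => 6 * (((p : ℕ) : ℝ) ^ 2)⁻¹ :=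
    (Real.summable_nat_pow_inv.2 one_lt_two).subtype _ |>.mul_left 6
  have hterm (p : Nat.Primes) : Tendsto (fun σ => log (eulerFactor a σ p) - a p * (p : ℝ) ^ (-σ))
      (𝓝[>] 1) (𝓝 (log (eulerFactor a 1 p) - a p * (p : ℝ) ^ (-1 : ℝ))) := by
    have hF := one_le_eulerFactor ha p.prop ha1 le_rfl
    exact ((continuousAt_log (by linarith)).tendsto.comp (tendsto_eulerFactor ha p.prop)).sub
      ((tendsto_rpow_neg_nhdsGT_one (by exact_mod_cast p.prop.ne_zero)).const_mul _)
  have hlim := tendsto_tsum_of_dominated_convergence hbound hterm <| by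
    filter_upwards [self_mem_nhdsWithin] with σ (hσ : 1 < σ)
    exact fun p => abs_log_eulerFactor_sub_le ha p.prop ha1 hσ.le
  refine ⟨_, hlim.congr' ?_⟩
  filter_upwards [self_mem_nhdsWithin] with σ (hσ : 1 < σ)
  have hlogprod := hasSum_log_of_hasProd
    (fun p => zero_lt_one.trans_le (one_le_eulerFactor ha p.prop ha1 hσ.le))
    (zero_lt_one.trans_le (one_le_tsum_mul_rpow_neg ha ha1 hσ)) (hasProd_eulerFactor ha ha1 hmul hσ)
  exact (hlogprod.sub ((summable_norm_mul_rpow_neg ha hσ).of_norm.subtype _).hasSum).tsum_eq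

end EulerProduct

lemma hasSum_div_add_one_rpow {a : ℕ → ℝ} {s : ℝ} (hs : s ≠ 0)
    (h : Summable fun n : ℕ => a n * (n : ℝ) ^ (-s)) :
    HasSum (fun n : ℕ => a (n + 1) / ((n : ℝ) + 1) ^ s) (∑' n : ℕ, a n * (n : ℝ) ^ (-s)) := by
  have h1 := (hasSum_nat_add_iff' 1).2 h.hasSum
  simp only [Finset.sum_range_one, Nat.cast_zero, zero_rpow (neg_ne_zero.2 hs), mul_zero,
    sub_zero, Nat.cast_add, Nat.cast_one] at h1
  refine h1.congr_fun fun n => ?_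
  rw [rpow_neg (by positivity), div_eq_mul_inv]

lemma sum_indicator_primes_eq_ncard {a : ℕ → ℝ} (ha : ∀ n, 1 ≤ n → a n = 0 ∨ a n = 1)
    {t : ℝ} (ht : 0 ≤ t) :
    ∑ k ∈ Finset.Icc 0 ⌊t⌋₊, {p : ℕ | p.Prime}.indicator a k =
      (Set.ncard {p : ℕ | p.Prime ∧ a p = 1 ∧ (p : ℝ) ≤ t} : ℝ) := by
  classical
  have hset : {p : ℕ | p.Prime ∧ a p = 1 ∧ (p : ℝ) ≤ t} =
      ↑((Finset.Icc 0 ⌊t⌋₊).filter fun p => p.Prime ∧ a p = 1) := by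
    ext p
    simp only [mem_ofPred_eq, Finset.coe_filter, Finset.mem_Icc, Nat.zero_le, true_and,
      Nat.le_floor_iff ht]
    tauto
  rw [hset, ncard_coe_finset, Finset.card_filter, Nat.cast_sum]
  refine Finset.sum_congr rfl fun p _ => ?_
  by_cases hp : p.Prime
  · rcases ha p hp.one_le with h | h <;> simp [hp, h]
  · simp [hp]

lemma tsum_indicator_primes_mul (f g : ℕ → ℝ) :
    ∑' n : ℕ, {p : ℕ | p.Prime}.indicator f n * g n = ∑' p : Nat.Primes, f p * g p := by
  simp_rw [← indicator_mul_left]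
  exact (tsum_subtype {p : ℕ | p.Prime} fun n => f n * g n).symm

lemma tendsto_rpow_mul_of_tendsto_mul_log_add_log {α : Type*} {l : Filter α} {f g : α → ℝ}
    {κ M : ℝ} (hf : ∀ᶠ x in l, 0 < f x) (hg : ∀ᶠ x in l, 0 < g x)
    (h : Tendsto (fun x => κ * log (f x) + log (g x)) l (𝓝 M)) :
    Tendsto (fun x => f x ^ κ * g x) l (𝓝 (exp M)) := by
  refine ((continuous_exp.tendsto M).comp h).congr' ?_
  filter_upwards [hf, hg] with x hfx hgx
  rw [Function.comp_apply, exp_add, exp_log hgx, rpow_def_of_pos hfx, mul_comm κ]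

theorem stmt_13_general (lam δ K : ℝ) (hδ : 0 < δ)
    (a0 : ℕ → ℝ)
    (hval : ∀ n : ℕ, 1 ≤ n → a0 n = 0 ∨ a0 n = 1)
    (hone : a0 1 = 1)
    (hmul : ∀ m n : ℕ, 1 ≤ m → 1 ≤ n → Nat.Coprime m n → a0 (m * n) = a0 m * a0 n)
    (hcount : ∀ t : ℝ, 2 ≤ t →
      |(Set.ncard {p : ℕ | p.Prime ∧ a0 p = 1 ∧ (p : ℝ) ≤ t} : ℝ) -
          (1 - lam) * t / Real.log t| ≤ K * t / Real.log t ^ (1 + δ)) :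
    (∀ s : ℝ, 1 < s → Summable (fun n : ℕ => a0 (n + 1) / ((n : ℝ) + 1) ^ s)) ∧
    ∃ L : ℝ, 0 < L ∧ Filter.Tendsto
      (fun s : ℝ => (s - 1) ^ (1 - lam) * ∑' n : ℕ, a0 (n + 1) / ((n : ℝ) + 1) ^ s)
      (nhdsWithin 1 (Set.Ioi 1)) (nhds L) := by
  have ha : ∀ n, 1 ≤ n → a0 n ∈ Icc (0 : ℝ) 1 := fun n hn => by
    rcases hval n hn with h | h <;> simp [h]
  have hseries (s : ℝ) (hs : 1 < s) := hasSum_div_add_one_rpow (by linarith : s ≠ 0)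
    (summable_norm_mul_rpow_neg ha hs).of_norm
  refine ⟨fun s hs => (hseries s hs).summable, ?_⟩
  set c := {p : ℕ | p.Prime}.indicator a0
  have hc (n : ℕ) : c n ∈ Icc (0 : ℝ) 1 := by
    by_cases hp : n.Prime
    · simpa [c, hp] using ha n hp.one_le
    · simp [c, hp]
  have hc2 (n : ℕ) (hn : n < 2) : c n = 0 :=
    indicator_of_notMem (fun hp : n.Prime => by linarith [hp.two_le]) _
  obtain ⟨C, hC⟩ := exists_tendsto_tsum_mul_rpow_neg_add_mul_log (κ := 1 - lam)
    (fun n => (hc n).1) hc2 (fun σ hσ => (summable_norm_mul_rpow_neg (fun n _ => hc n) hσ).of_norm)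
    hδ fun t ht => by rw [sum_indicator_primes_eq_ncard hval (by linarith)]; exact hcount t ht
  obtain ⟨R, hR⟩ := exists_tendsto_log_tsum_sub_tsum_primes ha hone hmul
  refine ⟨exp (C + R), exp_pos _, tendsto_rpow_mul_of_tendsto_mul_log_add_log ?_ ?_
    ((hC.add hR).congr' ?_)⟩ <;> filter_upwards [self_mem_nhdsWithin] with s (hs : 1 < s)
  · exact sub_pos.2 hs
  · rw [(hseries s hs).tsum_eq]
    exact zero_lt_one.trans_le (one_le_tsum_mul_rpow_neg ha hone hs)
  · rw [(hseries s hs).tsum_eq, tsum_indicator_primes_mul]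
    ring

/-- Let `λ ∈ [0,1)`, `δ > 0`, `K > 0`, and let `a⁰` be a multiplicative
`{0,1}`-valued function on the positive integers whose set
`A = {p prime : a⁰(p) = 1}` satisfies
`|#{p ∈ A : p ≤ t} - (1-λ) t/log t| ≤ K t/(log t)^{1+δ}` for all `t ≥ 2`.
Then `φ(s) = Σ a⁰(n) n^{-s}` converges for every real `s > 1` and
`lim_{s → 1⁺} (s-1)^{1-λ} φ(s)` exists and is a positive real number. -/
theorem stmt_13 (lam δ K : ℝ) (hlam0 : 0 ≤ lam) (hlam1 : lam < 1)
    (hδ : 0 < δ) (hK : 0 < K)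
    (a0 : ℕ → ℝ)
    (hval : ∀ n : ℕ, 1 ≤ n → a0 n = 0 ∨ a0 n = 1)
    (hone : a0 1 = 1)
    (hmul : ∀ m n : ℕ, 1 ≤ m → 1 ≤ n → Nat.Coprime m n → a0 (m * n) = a0 m * a0 n)
    (hcount : ∀ t : ℝ, 2 ≤ t →
      |(Set.ncard {p : ℕ | p.Prime ∧ a0 p = 1 ∧ (p : ℝ) ≤ t} : ℝ) -
          (1 - lam) * t / Real.log t| ≤ K * t / Real.log t ^ (1 + δ)) :
    (∀ s : ℝ, 1 < s → Summable (fun n : ℕ => a0 (n + 1) / ((n : ℝ) + 1) ^ s)) ∧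
    ∃ L : ℝ, 0 < L ∧ Filter.Tendsto
      (fun s : ℝ => (s - 1) ^ (1 - lam) * ∑' n : ℕ, a0 (n + 1) / ((n : ℝ) + 1) ^ s)
      (nhdsWithin 1 (Set.Ioi 1)) (nhds L) :=
  stmt_13_general lam δ K hδ a0 hval hone hmul hcount
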